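/- Every primitive set of n×n nonnegative matrices with no zero rows or columns admits a positive product of length at most (n(7n² + 6n + 8) − 24)/24, assuming every synchronizing automaton on n states has a synchronizing word of length at most n(7n² + 6n − 16)/48. -/

import Mathlib

/-!
Choosing one positive entry in every row of a matrix `A ∈ M` gives a map `ι → ι`; these maps are
the letters of a deterministic automaton. Reading a positive product of matrices of `M` backwards,
one finds letters whose product sends every state to one fixed state, i.e. a synchronizing word.
The assumed bound then gives a synchronizing word of length at most
`N = ⌊n (7n² + 6n − 16) / 48⌋`, and replacing each letter by a matrix of `M` it came from gives a
product of length at most `N` with a positive column `t`. The same argument for the transposed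
matrices gives a product of length at most `N` with a positive row `s`. Finally a shortest path
from `t` to `s` in the graph of positive entries has length at most `n − 1`, and the concatenation
of the three products is positive; its length is at most
`2N + n − 1 ≤ (n (7n² + 6n + 8) − 24) / 24`.
-/

open Matrix

namespace Matrix

variable {ι R : Type*}

section Transition

variable [DecidableEq ι] [Semiring R]

def transitionMatrix (f : ι → ι) : Matrix ι ι R :=
  of fun i j => if j = f i then 1 else 0

@[simp]
lemma transitionMatrix_apply (f : ι → ι) (i j : ι) :
    (transitionMatrix f : Matrix ι ι R) i j = if j = f i then 1 else 0 :=
  rfl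

lemma transitionMatrix_id : (transitionMatrix id : Matrix ι ι R) = 1 := by
  ext i j
  simp [one_apply, eq_comm]

variable [Fintype ι]

@[simp]
lemma transitionMatrix_mul_apply (f : ι → ι) (B : Matrix ι ι R) (i k : ι) :
    (transitionMatrix f * B : Matrix ι ι R) i k = B (f i) k := by
  simp [mul_apply]

lemma transitionMatrix_mul_transitionMatrix (f g : ι → ι) :
    (transitionMatrix f * transitionMatrix g : Matrix ι ι R) = transitionMatrix (g ∘ f) := by
  ext i k
  simp

lemma exists_list_prod_eq_transitionMatrix {w : List (Matrix ι ι R)}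
    (hw : ∀ P ∈ w, ∃ f, P = transitionMatrix f) : ∃ g, w.prod = transitionMatrix g := by
  induction w with
  | nil => exact ⟨id, transitionMatrix_id.symm⟩
  | cons P w ih =>
    obtain ⟨f, rfl⟩ := hw P (by simp)
    obtain ⟨g, hg⟩ := ih fun Q hQ => hw Q (by simp [hQ])
    exact ⟨g ∘ f, by rw [List.prod_cons, hg, transitionMatrix_mul_transitionMatrix]⟩

end Transition

section Nonneg

variable [Semiring R] [LinearOrder R] [IsStrictOrderedRing R]

lemma transitionMatrix_apply_nonneg [DecidableEq ι] (f : ι → ι) (i j : ι) :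
    0 ≤ (transitionMatrix f : Matrix ι ι R) i j := by
  rw [transitionMatrix_apply]
  split_ifs <;> simp

lemma transitionMatrix_apply_pos_iff [DecidableEq ι] {f : ι → ι} {i j : ι} :
    0 < (transitionMatrix f : Matrix ι ι R) i j ↔ j = f i := by
  rw [transitionMatrix_apply]
  split_ifs with h <;> simp [h]

variable [Fintype ι]

lemma list_prod_eq_transitionMatrix_const [DecidableEq ι] {w : List (Matrix ι ι R)}
    (hw : ∀ P ∈ w, ∃ f, P = transitionMatrix f) {t : ι} (ht : ∀ i, 0 < w.prod i t) :
    w.prod = transitionMatrix fun _ => t := by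
  obtain ⟨g, hg⟩ := exists_list_prod_eq_transitionMatrix hw
  have hgt : g = fun _ => t := funext fun i => by
    have hi := ht i
    rw [hg, transitionMatrix_apply_pos_iff] at hi
    exact hi.symm
  rw [hg, hgt]

lemma mul_apply_nonneg {A B : Matrix ι ι R} (hA : ∀ i j, 0 ≤ A i j) (hB : ∀ i j, 0 ≤ B i j)
    (i k : ι) : 0 ≤ (A * B) i k :=
  Finset.sum_nonneg fun j _ => mul_nonneg (hA i j) (hB j k)

lemma mul_apply_pos_iff {A B : Matrix ι ι R} (hA : ∀ i j, 0 ≤ A i j) (hB : ∀ i j, 0 ≤ B i j)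
    {i k : ι} : 0 < (A * B) i k ↔ ∃ j, 0 < A i j ∧ 0 < B j k := by
  rw [mul_apply, Finset.sum_pos_iff_of_nonneg fun j _ => mul_nonneg (hA i j) (hB j k)]
  simp only [Finset.mem_univ, true_and]
  exact exists_congr fun j =>
    ⟨fun h => ⟨pos_of_mul_pos_left h (hB j k), pos_of_mul_pos_right h (hA i j)⟩,
      fun h => mul_pos h.1 h.2⟩

variable [DecidableEq ι]

lemma list_prod_apply_nonneg {l : List (Matrix ι ι R)} (hl : ∀ A ∈ l, ∀ i j, 0 ≤ A i j) :
    ∀ i j, 0 ≤ l.prod i j := by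
  induction l with
  | nil => intro i j; rw [List.prod_nil, one_apply]; split_ifs <;> simp
  | cons A l ih =>
    rw [List.prod_cons]
    exact mul_apply_nonneg (hl A (by simp)) (ih fun B hB => hl B (by simp [hB]))

lemma list_prod_append_apply_pos_iff {l₁ l₂ : List (Matrix ι ι R)}
    (hl₁ : ∀ A ∈ l₁, ∀ i j, 0 ≤ A i j) (hl₂ : ∀ A ∈ l₂, ∀ i j, 0 ≤ A i j) {i k : ι} :
    0 < (l₁ ++ l₂).prod i k ↔ ∃ j, 0 < l₁.prod i j ∧ 0 < l₂.prod j k := by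
  rw [List.prod_append,
    mul_apply_pos_iff (list_prod_apply_nonneg hl₁) (list_prod_apply_nonneg hl₂)]

lemma list_prod_append_append_apply_pos {l₁ l₂ l₃ : List (Matrix ι ι R)}
    (hl : ∀ A ∈ l₁ ++ l₂ ++ l₃, ∀ i j, 0 ≤ A i j) {t s : ι} (h₁ : ∀ i, 0 < l₁.prod i t)
    (h₂ : 0 < l₂.prod t s) (h₃ : ∀ j, 0 < l₃.prod s j) (i j : ι) :
    0 < (l₁ ++ l₂ ++ l₃).prod i j := by
  have hl₁₂ : ∀ A ∈ l₁ ++ l₂, ∀ i j, 0 ≤ A i j := fun A hA => hl A (List.mem_append_left _ hA)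
  refine (list_prod_append_apply_pos_iff hl₁₂ fun A hA => hl A (List.mem_append_right _ hA)).2
    ⟨s, ?_, h₃ j⟩
  exact (list_prod_append_apply_pos_iff (fun A hA => hl₁₂ A (List.mem_append_left _ hA))
    (fun A hA => hl₁₂ A (List.mem_append_right _ hA))).2 ⟨t, h₁ i, h₂⟩

lemma exists_sublist_length_lt_of_card_le {l : List (Matrix ι ι R)}
    (hl : ∀ A ∈ l, ∀ i j, 0 ≤ A i j) (hcard : Fintype.card ι ≤ l.length) {i j : ι}
    (h : 0 < l.prod i j) :
    ∃ l' : List (Matrix ι ι R), l'.Sublist l ∧ l'.length < l.length ∧ 0 < l'.prod i j := by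
  have hsplit (k : ℕ) : ∃ a, 0 < (l.take k).prod i a ∧ 0 < (l.drop k).prod a j := by
    rwa [← list_prod_append_apply_pos_iff (fun A hA => hl A (List.mem_of_mem_take hA))
      (fun A hA => hl A (List.mem_of_mem_drop hA)), List.take_append_drop]
  choose a hpre hsuf using hsplit
  -- two of the `l.length + 1` intermediate states coincide; cut out the loop between them
  obtain ⟨p, q, hpq, hapq⟩ :=
    Fintype.exists_ne_map_eq_of_card_lt (fun k : Fin (l.length + 1) => a k) (by simp; omega)
  wlog hlt : p < q generalizing p q
  · exact this q p hpq.symm hapq.symm (lt_of_le_of_ne (not_lt.mp hlt) hpq.symm)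
  refine ⟨l.take p ++ l.drop q, ?_, ?_, ?_⟩
  · calc (l.take p ++ l.drop q).Sublist (l.take q ++ l.drop q) :=
          (List.take_sublist_take_left hlt.le).append (List.Sublist.refl _)
      _ = l := List.take_append_drop q l
  · simp only [List.length_append, List.length_take, List.length_drop]
    omega
  · exact (list_prod_append_apply_pos_iff (fun A hA => hl A (List.mem_of_mem_take hA))
      (fun A hA => hl A (List.mem_of_mem_drop hA))).2 ⟨a p, hpre p, hapq ▸ hsuf q⟩

lemma exists_sublist_length_lt_card {l : List (Matrix ι ι R)}
    (hl : ∀ A ∈ l, ∀ i j, 0 ≤ A i j) {i j : ι} (h : 0 < l.prod i j) :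
    ∃ l' : List (Matrix ι ι R), l'.Sublist l ∧ l'.length < Fintype.card ι ∧ 0 < l'.prod i j := by
  induction hlen : l.length using Nat.strong_induction_on generalizing l with
  | _ L ih =>
    by_cases hL : L < Fintype.card ι
    · exact ⟨l, List.Sublist.refl l, hlen ▸ hL, h⟩
    obtain ⟨l₁, hl₁, hlen₁, h₁⟩ := exists_sublist_length_lt_of_card_le hl (by omega) h
    obtain ⟨l', hl', hlen', h'⟩ :=
      ih _ (hlen ▸ hlen₁) (fun A hA => hl A (hl₁.subset hA)) h₁ rfl
    exact ⟨l', hl'.trans hl₁, hlen', h'⟩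

lemma exists_word_dominating {L M : Set (Matrix ι ι R)} (hL : ∀ P ∈ L, ∀ i j, 0 ≤ P i j)
    (hM : ∀ A ∈ M, ∀ i j, 0 ≤ A i j) (hLM : ∀ P ∈ L, ∃ A ∈ M, ∀ i j, 0 < P i j → 0 < A i j)
    {w : List (Matrix ι ι R)} (hw : ∀ P ∈ w, P ∈ L) :
    ∃ l : List (Matrix ι ι R), (∀ A ∈ l, A ∈ M) ∧ l.length = w.length ∧
      ∀ i j, 0 < w.prod i j → 0 < l.prod i j := by
  induction w with
  | nil => exact ⟨[], by simp, rfl, fun _ _ h => h⟩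
  | cons P w ih =>
    obtain ⟨A, hAM, hPA⟩ := hLM P (hw P (by simp))
    obtain ⟨l, hlM, hlen, hpos⟩ := ih fun Q hQ => hw Q (by simp [hQ])
    refine ⟨A :: l, by simpa [hAM] using hlM, by simp [hlen], fun i k h => ?_⟩
    rw [List.prod_cons, mul_apply_pos_iff (hL P (hw P (by simp)))
      (list_prod_apply_nonneg fun Q hQ => hL Q (hw Q (by simp [hQ])))] at h
    obtain ⟨j, hPij, hwjk⟩ := h
    rw [List.prod_cons, mul_apply_pos_iff (hM A hAM)
      (list_prod_apply_nonneg fun B hB => hM B (hlM B hB))]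
    exact ⟨j, hPA i j hPij, hpos j k hwjk⟩

end Nonneg

section Automaton

variable [Fintype ι] [DecidableEq ι] [Semiring R]

def IsSynchronizingWord (L : Finset (Matrix ι ι R)) (w : List (Matrix ι ι R)) : Prop :=
  (∀ P ∈ w, P ∈ L) ∧ w ≠ [] ∧ ∃ t, w.prod = transitionMatrix fun _ => t

variable (ι R) in
/-- Every synchronizing deterministic automaton on the states `ι`, its letters given as 0/1
matrices with one `1` per row, has a synchronizing word of length at most `N`. -/
def SynchronizingBound (N : ℕ) : Prop :=
  ∀ L : Finset (Matrix ι ι R), (∀ P ∈ L, ∀ i j, P i j = 0 ∨ P i j = 1) →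
    (∀ P ∈ L, ∀ i, ∃! j, P i j = 1) → (∃ w, IsSynchronizingWord L w) →
    ∃ w, IsSynchronizingWord L w ∧ w.length ≤ N

variable [LinearOrder R]

def selectionLetters (M : Finset (Matrix ι ι R)) : Finset (Matrix ι ι R) :=
  (Finset.univ.filter fun f : ι → ι => ∃ A ∈ M, ∀ i, 0 < A i (f i)).image transitionMatrix

variable {M : Finset (Matrix ι ι R)} {P : Matrix ι ι R}

lemma mem_selectionLetters :
    P ∈ selectionLetters M ↔ ∃ f, (∃ A ∈ M, ∀ i, 0 < A i (f i)) ∧ transitionMatrix f = P := by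
  simp [selectionLetters]

variable [IsStrictOrderedRing R]

lemma selectionLetters_apply_nonneg (hP : P ∈ selectionLetters M) : ∀ i j, 0 ≤ P i j := by
  obtain ⟨f, -, rfl⟩ := mem_selectionLetters.1 hP
  exact transitionMatrix_apply_nonneg f

lemma selectionLetters_apply_eq_zero_or_one (hP : P ∈ selectionLetters M) (i j : ι) :
    P i j = 0 ∨ P i j = 1 := by
  obtain ⟨f, -, rfl⟩ := mem_selectionLetters.1 hP
  by_cases h : j = f i <;> simp [h]

lemma selectionLetters_existsUnique_apply_eq_one (hP : P ∈ selectionLetters M) (i : ι) :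
    ∃! j, P i j = 1 := by
  obtain ⟨f, -, rfl⟩ := mem_selectionLetters.1 hP
  exact ⟨f i, by simp, fun j hj => by by_contra h; simp [h] at hj⟩

lemma exists_mem_apply_pos_of_mem_selectionLetters (hP : P ∈ selectionLetters M) :
    ∃ A ∈ M, ∀ i j, 0 < P i j → 0 < A i j := by
  obtain ⟨f, ⟨A, hA, hfA⟩, rfl⟩ := mem_selectionLetters.1 hP
  exact ⟨A, hA, fun i j h => transitionMatrix_apply_pos_iff.1 h ▸ hfA i⟩

lemma exists_word_selectionLetters (hpos : ∀ A ∈ M, ∀ i j, 0 ≤ A i j)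
    (hrow : ∀ A ∈ M, ∀ i, ∃ j, 0 < A i j) {l : List (Matrix ι ι R)} (hl : ∀ A ∈ l, A ∈ M)
    (T : Set ι) (hT : ∀ i, ∃ j ∈ T, 0 < l.prod i j) :
    ∃ w : List (Matrix ι ι R), (∀ P ∈ w, P ∈ selectionLetters M) ∧ w.length = l.length ∧
      ∀ i, ∃ j ∈ T, 0 < w.prod i j := by
  induction l using List.reverseRecOn generalizing T with
  | nil => exact ⟨[], by simp, rfl, hT⟩
  | append_singleton l A ih =>
    have hA : A ∈ M := hl A (by simp)
    have hlM : ∀ B ∈ l, B ∈ M := fun B hB => hl B (by simp [hB])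
    set T' : Set ι := {k | ∃ j ∈ T, 0 < A k j}
    have hT' : ∀ i, ∃ k ∈ T', 0 < l.prod i k := by
      intro i
      obtain ⟨j, hjT, hj⟩ := hT i
      obtain ⟨k, hik, hkj⟩ := (list_prod_append_apply_pos_iff (fun B hB => hpos B (hlM B hB))
        (by simpa using hpos A hA)).1 hj
      exact ⟨k, ⟨j, hjT, by simpa using hkj⟩, hik⟩
    obtain ⟨w, hwL, hwlen, hw⟩ := ih hlM T' hT'
    have hsel (k : ι) : ∃ j, 0 < A k j ∧ (k ∈ T' → j ∈ T) := by
      by_cases hk : k ∈ T'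
      · obtain ⟨j, hjT, hj⟩ := hk
        exact ⟨j, hj, fun _ => hjT⟩
      · obtain ⟨j, hj⟩ := hrow A hA k
        exact ⟨j, hj, fun h => absurd h hk⟩
    choose f hfA hfT using hsel
    refine ⟨w ++ [transitionMatrix f], ?_, by simp [hwlen], fun i => ?_⟩
    · intro P hP
      rcases List.mem_append.1 hP with hP | hP
      · exact hwL P hP
      · rw [List.mem_singleton.1 hP]
        exact mem_selectionLetters.2 ⟨f, ⟨A, hA, hfA⟩, rfl⟩
    · obtain ⟨k, hkT', hk⟩ := hw i
      refine ⟨f k, hfT k hkT', ?_⟩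
      have hwnonneg := list_prod_apply_nonneg fun P hP => selectionLetters_apply_nonneg (hwL P hP)
      rw [List.prod_append, List.prod_singleton,
        mul_apply_pos_iff hwnonneg (transitionMatrix_apply_nonneg f)]
      exact ⟨k, hk, transitionMatrix_apply_pos_iff.2 rfl⟩

theorem exists_word_length_le_pos_column {N : ℕ} (hN : SynchronizingBound ι R N)
    (hpos : ∀ A ∈ M, ∀ i j, 0 ≤ A i j) (hrow : ∀ A ∈ M, ∀ i, ∃ j, 0 < A i j)
    {l₀ : List (Matrix ι ι R)} (hl₀M : ∀ A ∈ l₀, A ∈ M) (hl₀ne : l₀ ≠ []) {t : ι}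
    (hl₀t : ∀ i, 0 < l₀.prod i t) :
    ∃ l : List (Matrix ι ι R), (∀ A ∈ l, A ∈ M) ∧ l ≠ [] ∧ l.length ≤ N ∧
      ∃ t, ∀ i, 0 < l.prod i t := by
  obtain ⟨w, hwL, hwlen, hw⟩ :=
    exists_word_selectionLetters hpos hrow hl₀M {t} (by simpa using hl₀t)
  have hwsync : IsSynchronizingWord (selectionLetters M) w := by
    refine ⟨hwL, List.ne_nil_of_length_pos (hwlen ▸ List.length_pos_iff.2 hl₀ne), t, ?_⟩
    refine list_prod_eq_transitionMatrix_const (fun P hP => ?_) (by simpa using hw)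
    obtain ⟨f, -, rfl⟩ := mem_selectionLetters.1 (hwL P hP)
    exact ⟨f, rfl⟩
  obtain ⟨w', ⟨hw'L, hw'ne, t', hw't'⟩, hw'len⟩ := hN _
    (fun P hP => selectionLetters_apply_eq_zero_or_one hP)
    (fun P hP => selectionLetters_existsUnique_apply_eq_one hP) ⟨w, hwsync⟩
  obtain ⟨l, hlM, hllen, hl⟩ := exists_word_dominating
    (L := (selectionLetters M : Set (Matrix ι ι R))) (M := (M : Set (Matrix ι ι R)))
    (fun P hP => selectionLetters_apply_nonneg hP) hpos
    (fun P hP => exists_mem_apply_pos_of_mem_selectionLetters hP) hw'L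
  exact ⟨l, hlM, List.ne_nil_of_length_pos (hllen ▸ List.length_pos_iff.2 hw'ne),
    hllen ▸ hw'len, t', fun i => hl i t' (by simp [hw't'])⟩

end Automaton

section Transpose

variable [Fintype ι] [DecidableEq ι] [CommSemiring R] [LinearOrder R] [IsStrictOrderedRing R]
  {M : Finset (Matrix ι ι R)}

theorem exists_word_length_le_pos_row {N : ℕ} (hN : SynchronizingBound ι R N)
    (hpos : ∀ A ∈ M, ∀ i j, 0 ≤ A i j) (hcol : ∀ A ∈ M, ∀ j, ∃ i, 0 < A i j)
    {l₀ : List (Matrix ι ι R)} (hl₀M : ∀ A ∈ l₀, A ∈ M) (hl₀ne : l₀ ≠ []) {s : ι}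
    (hl₀s : ∀ j, 0 < l₀.prod s j) :
    ∃ l : List (Matrix ι ι R), (∀ A ∈ l, A ∈ M) ∧ l ≠ [] ∧ l.length ≤ N ∧
      ∃ s, ∀ j, 0 < l.prod s j := by
  obtain ⟨l, hlM, hlne, hlN, s', hl⟩ := exists_word_length_le_pos_column hN
    (M := M.image transpose) (l₀ := (l₀.map transpose).reverse) (t := s)
    (by simpa using fun A hA i j => hpos A hA j i) (by simpa using fun A hA i => hcol A hA i)
    (by simpa using hl₀M) (by simpa using hl₀ne) (by simpa [← transpose_list_prod] using hl₀s)
  refine ⟨(l.map transpose).reverse, fun A hA => ?_, by simpa using hlne, by simpa using hlN, s',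
    by simpa [← transpose_list_prod] using hl⟩
  obtain ⟨B, hB, rfl⟩ := List.mem_map.1 (List.mem_reverse.1 hA)
  obtain ⟨C, hC, rfl⟩ := Finset.mem_image.1 (hlM B hB)
  simpa using hC

end Transpose

end Matrix

lemma two_mul_div_add_le {n a b c : ℕ} (ha : a ≤ n * (7 * n ^ 2 + 6 * n - 16) / 48)
    (hb : b ≤ n * (7 * n ^ 2 + 6 * n - 16) / 48) (hc : c < n) :
    24 * (a + (c + b)) ≤ n * (7 * n ^ 2 + 6 * n + 8) - 24 := by
  rcases Nat.lt_or_ge n 2 with hn | hn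
  · obtain rfl : n = 1 := by omega
    omega
  have h₁ : n * (7 * n ^ 2 + 6 * n - 16) = n * (7 * n ^ 2 + 6 * n) - 16 * n := by
    rw [Nat.mul_sub, mul_comm n 16]
  have h₂ : n * (7 * n ^ 2 + 6 * n + 8) = n * (7 * n ^ 2 + 6 * n) + 8 * n := by ring
  have h₃ : 16 * n ≤ n * (7 * n ^ 2 + 6 * n) := by nlinarith
  omega

theorem stmt13 (n : ℕ) (hn : 0 < n)
    (hsync : ∀ M' : Finset (Matrix (Fin n) (Fin n) ℝ),
      (∀ A ∈ M', ∀ i j, A i j = 0 ∨ A i j = 1) →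
      (∀ A ∈ M', ∀ i, ∃! j, A i j = 1) →
      (∃ l : List (Matrix (Fin n) (Fin n) ℝ), (∀ P ∈ l, P ∈ M') ∧ l ≠ [] ∧
        ∃ i : Fin n, l.prod = Matrix.of fun _ c => if c = i then (1 : ℝ) else 0) →
      ∃ l : List (Matrix (Fin n) (Fin n) ℝ), (∀ P ∈ l, P ∈ M') ∧ l ≠ [] ∧
        48 * l.length ≤ n * (7 * n ^ 2 + 6 * n - 16) ∧
        ∃ i : Fin n, l.prod = Matrix.of fun _ c => if c = i then (1 : ℝ) else 0)
    (M : Finset (Matrix (Fin n) (Fin n) ℝ))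
    (hpos : ∀ A ∈ M, ∀ i j, 0 ≤ A i j)
    (hrow : ∀ A ∈ M, ∀ i, ∃ j, 0 < A i j)
    (hcol : ∀ A ∈ M, ∀ j, ∃ i, 0 < A i j)
    (hprim : ∃ l : List (Matrix (Fin n) (Fin n) ℝ),
      (∀ P ∈ l, P ∈ M) ∧ l ≠ [] ∧ ∀ i j, 0 < l.prod i j) :
    ∃ l : List (Matrix (Fin n) (Fin n) ℝ),
      (∀ P ∈ l, P ∈ M) ∧ l ≠ [] ∧
      24 * l.length ≤ n * (7 * n ^ 2 + 6 * n + 8) - 24 ∧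
      ∀ i j, 0 < l.prod i j := by
  obtain ⟨l₀, hl₀M, hl₀ne, hl₀pos⟩ := hprim
  have hN : SynchronizingBound (Fin n) ℝ (n * (7 * n ^ 2 + 6 * n - 16) / 48) := by
    intro L h01 hdet hL
    obtain ⟨w, hwL, hwne, hwlen, hw⟩ := hsync L h01 hdet hL
    exact ⟨w, ⟨hwL, hwne, hw⟩, (Nat.le_div_iff_mul_le (by norm_num)).2 (by omega)⟩
  obtain ⟨lQ, hQM, hQne, hQlen, t, hQ⟩ :=
    exists_word_length_le_pos_column hN hpos hrow hl₀M hl₀ne (t := ⟨0, hn⟩) (hl₀pos · _)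
  obtain ⟨lR, hRM, -, hRlen, s, hR⟩ :=
    exists_word_length_le_pos_row hN hpos hcol hl₀M hl₀ne (s := ⟨0, hn⟩) (hl₀pos _)
  obtain ⟨lX, hXl₀, hXlen, hX⟩ :=
    exists_sublist_length_lt_card (fun A hA => hpos A (hl₀M A hA)) (hl₀pos t s)
  have hM : ∀ A ∈ lQ ++ lX ++ lR, A ∈ M := by
    simp only [List.mem_append]
    rintro A ((hA | hA) | hA)
    exacts [hQM A hA, hl₀M A (hXl₀.subset hA), hRM A hA]
  refine ⟨lQ ++ lX ++ lR, hM, by simp [hQne], ?_,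
    list_prod_append_append_apply_pos (fun A hA => hpos A (hM A hA)) hQ hX hR⟩
  rw [Fintype.card_fin] at hXlen
  simpa using two_mul_div_add_le hQlen hRlen hXlen
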